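/- arXiv:2510.18761 — 2 statements merged into one kernel-verified Lean document; each statement's English description precedes it below -/
import Mathlib

section
/- For any two POPs p and q, the disjoint sums p+q and q+p are Wilf-equivalent. -/
/-- A partially ordered pattern (POP) of size `k`: a strict partial order on the
labels `{1, …, k}`, given by the relation `lt a b` meaning "`a` is strictly below `b`". -/
structure POP (k : ℕ) where
  lt : ℕ → ℕ → Prop
  supp : ∀ a b, lt a b → 1 ≤ a ∧ a ≤ k ∧ 1 ≤ b ∧ b ≤ k
  irrefl : ∀ a, ¬ lt a a
  trans : ∀ a b c, lt a b → lt b c → lt a c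

/-- An occurrence of the POP `p` in a permutation `π` of `{1, …, n}`:
indices `i₁ < ⋯ < i_k` with `π (i_a) < π (i_b)` whenever label `a` is strictly
below label `b` in `p` (everything 0-indexed internally). -/
def POP.Occurs {k : ℕ} (p : POP k) {n : ℕ} (π : Equiv.Perm (Fin n)) : Prop :=
  ∃ f : Fin k → Fin n, StrictMono f ∧
    ∀ a b : Fin k, p.lt ((a : ℕ) + 1) ((b : ℕ) + 1) → π (f a) < π (f b)

/-- The number of permutations of `{1, …, n}` avoiding the POP `p`. -/
noncomputable def POP.avoiders {k : ℕ} (p : POP k) (n : ℕ) : ℕ :=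
  Nat.card {π : Equiv.Perm (Fin n) // ¬ p.Occurs π}

/-- Wilf-equivalence of POPs: the same number of avoiding permutations for every `n ≥ 1`. -/
def WilfEquiv {k l : ℕ} (p : POP k) (q : POP l) : Prop :=
  ∀ n : ℕ, 1 ≤ n → p.avoiders n = q.avoiders n

/-- `σ` is a transversal of the Ferrers board with row lengths `lam`
(rows and columns 0-indexed): the 1 of column `j` lies in cell (row `σ j`, column `j`),
which must lie inside the board. -/
def IsTransversal {n : ℕ} (lam : Fin n → ℕ) (σ : Equiv.Perm (Fin n)) : Prop :=
  ∀ j : Fin n, (j : ℕ) < lam (σ j)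

/-- The transversal `σ` of the Ferrers board `lam` contains the POP `p`:
there are rows `r₁ < ⋯ < r_k`, columns `c₁ < ⋯ < c_k`, all cells `(r i, c j)` inside
the board, and a bijection `τ` with `σ (c j) = r (τ j)` and `τ a < τ b` whenever
`a` is strictly below `b` in `p`. -/
def POP.TContains {k : ℕ} (p : POP k) {n : ℕ} (lam : Fin n → ℕ)
    (σ : Equiv.Perm (Fin n)) : Prop :=
  ∃ (r c : Fin k → Fin n) (τ : Equiv.Perm (Fin k)),
    StrictMono r ∧ StrictMono c ∧
    (∀ i j, (c j : ℕ) < lam (r i)) ∧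
    (∀ j, σ (c j) = r (τ j)) ∧
    ∀ a b : Fin k, p.lt ((a : ℕ) + 1) ((b : ℕ) + 1) → τ a < τ b

/-- The number of transversals of the Ferrers board `lam` avoiding the POP `p`. -/
noncomputable def POP.shapeAvoiders {k : ℕ} (p : POP k) {n : ℕ} (lam : Fin n → ℕ) : ℕ :=
  Nat.card {σ : Equiv.Perm (Fin n) // IsTransversal lam σ ∧ ¬ p.TContains lam σ}

/-- Shape-Wilf-equivalence of POPs: the same number of avoiding transversals for
every Ferrers board (a weakly decreasing positive row-length function). -/
def ShapeWilfEquiv {k l : ℕ} (p : POP k) (q : POP l) : Prop :=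
  ∀ (n : ℕ) (lam : Fin n → ℕ), Antitone lam → (∀ i, 0 < lam i) →
    p.shapeAvoiders lam = q.shapeAvoiders lam

/-- The ordinal sum `p ⊕ q` of POPs: labels `1, …, k` ordered as in `p`, labels
`k+1, …, k+l` ordered as in `q` (shifted), and every label `≤ k` strictly below
every label `> k`. -/
def OrdSum {k l : ℕ} (p : POP k) (q : POP l) : POP (k + l) where
  lt a b := (a ≤ k ∧ b ≤ k ∧ p.lt a b) ∨ (k < a ∧ k < b ∧ q.lt (a - k) (b - k)) ∨
    (1 ≤ a ∧ a ≤ k ∧ k < b ∧ b ≤ k + l)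
  supp a b h := by
    rcases h with ⟨_, _, h⟩ | ⟨ha, hb, h⟩ | h
    · have := p.supp _ _ h; omega
    · have := q.supp _ _ h; omega
    · omega
  irrefl a h := by
    rcases h with ⟨_, _, h⟩ | ⟨_, _, h⟩ | h
    · exact p.irrefl _ h
    · exact q.irrefl _ h
    · omega
  trans a b c hab hbc := by
    rcases hab with ⟨ha, hb, h1⟩ | ⟨ha, hb, h1⟩ | h1 <;>
      rcases hbc with ⟨hb', hc, h2⟩ | ⟨hb', hc, h2⟩ | h2
    · exact Or.inl ⟨ha, hc, p.trans _ _ _ h1 h2⟩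
    · omega
    · have := p.supp _ _ h1; right; right; omega
    · omega
    · exact Or.inr (Or.inl ⟨ha, hc, q.trans _ _ _ h1 h2⟩)
    · omega
    · omega
    · have := q.supp _ _ h2; right; right; omega
    · omega

/-- The disjoint sum `p + q` of POPs: labels `1, …, k` ordered as in `p`, labels
`k+1, …, k+l` ordered as in `q` (shifted), and no relations between the two parts. -/
def DisjSum {k l : ℕ} (p : POP k) (q : POP l) : POP (k + l) where
  lt a b := (a ≤ k ∧ b ≤ k ∧ p.lt a b) ∨ (k < a ∧ k < b ∧ q.lt (a - k) (b - k))
  supp a b h := by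
    rcases h with ⟨_, _, h⟩ | ⟨ha, hb, h⟩
    · have := p.supp _ _ h; omega
    · have := q.supp _ _ h; omega
  irrefl a h := by
    rcases h with ⟨_, _, h⟩ | ⟨_, _, h⟩
    · exact p.irrefl _ h
    · exact q.irrefl _ h
  trans a b c hab hbc := by
    rcases hab with ⟨ha, hb, h1⟩ | ⟨ha, hb, h1⟩ <;>
      rcases hbc with ⟨hb', hc, h2⟩ | ⟨hb', hc, h2⟩
    · exact Or.inl ⟨ha, hc, p.trans _ _ _ h1 h2⟩
    · omega
    · omega
    · exact Or.inr ⟨ha, hc, q.trans _ _ _ h1 h2⟩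

/-- The label `i` is isolated in the POP `p`: it is a label of `p` incomparable
to every other label. -/
def POP.Isolated {k : ℕ} (p : POP k) (i : ℕ) : Prop :=
  1 ≤ i ∧ i ≤ k ∧ ∀ j, ¬ p.lt i j ∧ ¬ p.lt j i

/-- The restriction of the POP `p` to the initial labels `{1, …, m}`. -/
def POP.restrictInit {k : ℕ} (p : POP k) (m : ℕ) : POP m where
  lt a b := a ≤ m ∧ b ≤ m ∧ p.lt a b
  supp a b h := by have := p.supp _ _ h.2.2; omega
  irrefl a h := p.irrefl a h.2.2
  trans a b c h1 h2 := ⟨h1.1, h2.2.1, p.trans _ _ _ h1.2.2 h2.2.2⟩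

/-- The reverse `r(p)` of a POP of size `k`: `a` is strictly below `b` iff
`k+1-a` is strictly below `k+1-b` in `p`. -/
def POP.rev {k : ℕ} (p : POP k) : POP k where
  lt a b := a ≤ k ∧ b ≤ k ∧ p.lt (k + 1 - a) (k + 1 - b)
  supp a b h := by
    obtain ⟨h1, h2, h3⟩ := h
    have := p.supp _ _ h3; omega
  irrefl a h := p.irrefl _ h.2.2
  trans a b c h1 h2 := ⟨h1.1, h2.2.1, p.trans _ _ _ h1.2.2 h2.2.2⟩


/-!
For `a ≤ b`, let `N_{p,q}(a, b)` count the `π ∈ S_n` with no occurrence of `p` in the positions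
`[0, a)` and none of `q` in the positions `[b, n)` (positions counted from `0`). Exchanging the
blocks of positions `[0, a)` and `[b, n)` while keeping `[a, b)` between them gives
`N_{p,q}(a, b) = N_{q,p}(n - b, n - a)`.

An occurrence of `p + q` is an occurrence of `p` followed by one of `q`. Sorting the avoiders of
`p + q` by the least `t` for which `p` occurs in `[0, t)` gives, for nonempty `p` and `q`,
  `|S_n(p + q)| + ∑_{t ≤ n} N(t, t) = N(0, 0) + N(n, n) + ∑_{t < n} N(t, t + 1)`,
and by the block exchange every term other than `|S_n(p + q)|` is symmetric in `p` and `q`.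
If `p` or `q` is empty, `p + q` and `q + p` are the same pattern.
-/

theorem Nat.card_subtype_eq_add_of_iff {α : Type*} [Finite α] {Φ R X Y : α → Prop}
    (hX : ∀ x, Φ x ∧ R x ↔ X x) (hY : ∀ x, Φ x ∧ ¬ R x ↔ Y x) :
    Nat.card {x // Φ x} = Nat.card {x // X x} + Nat.card {x // Y x} := by
  classical
  rw [← Nat.card_sum]
  exact Nat.card_congr ((Equiv.sumCompl fun x : {x // Φ x} => R x).symm.trans (Equiv.sumCongr
    ((Equiv.subtypeSubtypeEquivSubtypeInter Φ R).trans (Equiv.subtypeEquivRight hX))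
    ((Equiv.subtypeSubtypeEquivSubtypeInter Φ (¬ R ·)).trans (Equiv.subtypeEquivRight hY))))

theorem Finset.add_sum_range_eq_of_add_eq {A u v : ℕ → ℕ} (h : ∀ t, A t + u t = A (t + 1) + v t)
    (n : ℕ) : A 0 + ∑ t ∈ range n, u t = A n + ∑ t ∈ range n, v t := by
  induction n with
  | zero => simp
  | succ n ih =>
    rw [sum_range_succ, sum_range_succ]
    linarith [h n]

/-- Position `i` of `π * blockSwap n a b _ _` is position `blockSwap n a b _ _ i` of `π`: the blocks
of positions `[0, a)` and `[b, n)` are exchanged and `[a, b)` stays between them. -/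
def blockSwap (n a b : ℕ) (hab : a ≤ b) (hbn : b ≤ n) : Equiv.Perm (Fin n) where
  toFun i := ⟨if (i : ℕ) < n - b then i + b else if (i : ℕ) < n - a then i + a + b - n
      else i + a - n, by split_ifs <;> omega⟩
  invFun i := ⟨if (i : ℕ) < a then i + n - a else if (i : ℕ) < b then i + n - a - b
      else i - b, by split_ifs <;> omega⟩
  left_inv i := by
    ext
    simp only
    split_ifs <;> omega
  right_inv i := by
    ext
    simp only
    split_ifs <;> omega

namespace POP

variable {k l n : ℕ}

theorem avoiders_congr {k' : ℕ} (p : POP k) (p' : POP k') (hk : k = k')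
    (h : ∀ a b, p.lt a b ↔ p'.lt a b) (n : ℕ) : p.avoiders n = p'.avoiders n := by
  subst hk
  obtain rfl : p = p' := by
    cases p; cases p'
    congr
    funext a b
    exact propext (h a b)
  rfl

def OccursIn (p : POP k) (π : Equiv.Perm (Fin n)) (a b : ℕ) : Prop :=
  ∃ f : Fin k → Fin n, StrictMono f ∧ (∀ i, a ≤ (f i : ℕ) ∧ (f i : ℕ) < b) ∧
    ∀ i j : Fin k, p.lt ((i : ℕ) + 1) ((j : ℕ) + 1) → π (f i) < π (f j)

section OccursIn

variable {p : POP k} {π : Equiv.Perm (Fin n)} {a b a' b' : ℕ}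

theorem OccursIn.mono (h : p.OccursIn π a b) (ha : a' ≤ a) (hb : b ≤ b') :
    p.OccursIn π a' b' := by
  obtain ⟨f, hf, hpos, hocc⟩ := h
  exact ⟨f, hf, fun i => ⟨ha.trans (hpos i).1, (hpos i).2.trans_le hb⟩, hocc⟩

theorem OccursIn.extend_right (h : p.OccursIn π a b) : p.OccursIn π a n := by
  obtain ⟨f, hf, hpos, hocc⟩ := h
  exact ⟨f, hf, fun i => ⟨(hpos i).1, (f i).isLt⟩, hocc⟩

theorem not_occursIn_of_le (hk : 0 < k) (hba : b ≤ a) : ¬ p.OccursIn π a b := by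
  rintro ⟨f, -, hpos, -⟩
  have := hpos ⟨0, hk⟩
  omega

theorem occursIn_mul_iff (e : Equiv.Perm (Fin n))
    (hmaps : ∀ i : Fin n, a ≤ (i : ℕ) ∧ (i : ℕ) < b ↔ a' ≤ (e i : ℕ) ∧ (e i : ℕ) < b')
    (hmono : StrictMonoOn e {i | a ≤ (i : ℕ) ∧ (i : ℕ) < b}) :
    p.OccursIn (π * e) a b ↔ p.OccursIn π a' b' := by
  constructor
  · rintro ⟨f, hf, hpos, hocc⟩
    exact ⟨e ∘ f, fun i j hij => hmono (hpos i) (hpos j) (hf hij),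
      fun i => (hmaps (f i)).1 (hpos i), hocc⟩
  · rintro ⟨g, hg, hpos, hocc⟩
    have hpos' : ∀ i, a ≤ (e.symm (g i) : ℕ) ∧ (e.symm (g i) : ℕ) < b := fun i =>
      (hmaps _).2 (by simpa using hpos i)
    refine ⟨e.symm ∘ g, fun i j hij => ?_, hpos', fun i j hij => by simpa using hocc i j hij⟩
    exact (hmono.lt_iff_lt (hpos' i) (hpos' j)).1 (by simpa using hg hij)

end OccursIn

theorem disjSum_lt_iff_of_zero_left (p : POP 0) (q : POP l) (a b : ℕ) :
    (DisjSum p q).lt a b ↔ q.lt a b := by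
  simp only [DisjSum, Nat.sub_zero]
  constructor
  · rintro (⟨-, -, h⟩ | ⟨-, -, h⟩)
    · have := p.supp _ _ h; omega
    · exact h
  · intro h
    have := q.supp _ _ h
    exact Or.inr ⟨by omega, by omega, h⟩

theorem disjSum_lt_iff_of_zero_right (p : POP k) (q : POP 0) (a b : ℕ) :
    (DisjSum p q).lt a b ↔ p.lt a b := by
  simp only [DisjSum]
  constructor
  · rintro (⟨-, -, h⟩ | ⟨-, -, h⟩)
    · exact h
    · have := q.supp _ _ h; omega
  · intro h
    have := p.supp _ _ h
    exact Or.inl ⟨by omega, by omega, h⟩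

section DisjSum

variable (p : POP k) (q : POP l)

theorem disjSum_lt_castAdd_castAdd_iff (i i' : Fin k) :
    (DisjSum p q).lt ((Fin.castAdd l i : ℕ) + 1) ((Fin.castAdd l i' : ℕ) + 1) ↔
      p.lt ((i : ℕ) + 1) ((i' : ℕ) + 1) := by
  simp only [DisjSum, Fin.val_castAdd]
  constructor
  · rintro (⟨-, -, h⟩ | ⟨h, -⟩)
    · exact h
    · omega
  · exact fun h => Or.inl ⟨i.isLt, i'.isLt, h⟩

theorem disjSum_lt_natAdd_natAdd_iff (j j' : Fin l) :
    (DisjSum p q).lt ((Fin.natAdd k j : ℕ) + 1) ((Fin.natAdd k j' : ℕ) + 1) ↔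
      q.lt ((j : ℕ) + 1) ((j' : ℕ) + 1) := by
  simp only [DisjSum, Fin.val_natAdd, add_assoc, Nat.add_sub_cancel_left]
  constructor
  · rintro (⟨h, -⟩ | ⟨-, -, h⟩)
    · omega
    · exact h
  · exact fun h => Or.inr ⟨by omega, by omega, h⟩

theorem not_disjSum_lt_castAdd_natAdd (i : Fin k) (j : Fin l) :
    ¬ (DisjSum p q).lt ((Fin.castAdd l i : ℕ) + 1) ((Fin.natAdd k j : ℕ) + 1) := by
  simp only [DisjSum, Fin.val_castAdd, Fin.val_natAdd]
  omega

theorem not_disjSum_lt_natAdd_castAdd (j : Fin l) (i : Fin k) :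
    ¬ (DisjSum p q).lt ((Fin.natAdd k j : ℕ) + 1) ((Fin.castAdd l i : ℕ) + 1) := by
  simp only [DisjSum, Fin.val_castAdd, Fin.val_natAdd]
  omega

theorem disjSum_occurs_iff (hl : 0 < l) (π : Equiv.Perm (Fin n)) :
    (DisjSum p q).Occurs π ↔ ∃ t, p.OccursIn π 0 t ∧ q.OccursIn π t n := by
  constructor
  · rintro ⟨F, hF, hocc⟩
    refine ⟨F (Fin.natAdd k ⟨0, hl⟩), ⟨F ∘ Fin.castAdd l, hF.comp (Fin.strictMono_castAdd l),
      fun i => ⟨Nat.zero_le _, hF (by simp [Fin.lt_def])⟩,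
      fun i i' h => hocc _ _ ((disjSum_lt_castAdd_castAdd_iff p q i i').2 h)⟩,
      ⟨F ∘ Fin.natAdd k, hF.comp (Fin.strictMono_natAdd k),
      fun j => ⟨hF.monotone (by simp [Fin.le_def]), (F _).isLt⟩,
      fun j j' h => hocc _ _ ((disjSum_lt_natAdd_natAdd_iff p q j j').2 h)⟩⟩
  · rintro ⟨t, ⟨f, hf, hfpos, hfocc⟩, ⟨g, hg, hgpos, hgocc⟩⟩
    have hfg : ∀ i j, f i < g j := fun i j =>
      Fin.lt_def.2 ((hfpos i).2.trans_le (hgpos j).1)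
    refine ⟨Fin.append f g, fun x y hxy => ?_, fun x y hxy => ?_⟩
    · induction x using Fin.addCases <;> induction y using Fin.addCases <;>
        simp only [Fin.append_left, Fin.append_right]
      · exact hf ((Fin.strictMono_castAdd l).lt_iff_lt.1 hxy)
      · exact hfg _ _
      · simp only [Fin.lt_def, Fin.val_natAdd, Fin.val_castAdd] at hxy
        omega
      · exact hg ((Fin.strictMono_natAdd k).lt_iff_lt.1 hxy)
    · induction x using Fin.addCases <;> induction y using Fin.addCases <;>
        simp only [Fin.append_left, Fin.append_right]
      · exact hfocc _ _ ((disjSum_lt_castAdd_castAdd_iff p q _ _).1 hxy)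
      · exact absurd hxy (not_disjSum_lt_castAdd_natAdd p q _ _)
      · exact absurd hxy (not_disjSum_lt_natAdd_castAdd p q _ _)
      · exact hgocc _ _ ((disjSum_lt_natAdd_natAdd_iff p q _ _).1 hxy)

noncomputable def splitAvoiders (n a b : ℕ) : ℕ :=
  Nat.card {π : Equiv.Perm (Fin n) // ¬ p.OccursIn π 0 a ∧ ¬ q.OccursIn π b n}

theorem splitAvoiders_comm {a b : ℕ} (hab : a ≤ b) (hbn : b ≤ n) :
    p.splitAvoiders q n a b = q.splitAvoiders p n (n - b) (n - a) := by
  set e := blockSwap n a b hab hbn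
  have he : ∀ i : Fin n, (e i : ℕ) = if (i : ℕ) < n - b then i + b
      else if (i : ℕ) < n - a then i + a + b - n else i + a - n := fun _ => rfl
  refine Nat.card_congr (Equiv.subtypeEquiv (Equiv.mulRight e) fun π => ?_)
  rw [Equiv.coe_mulRight, occursIn_mul_iff (a' := b) (b' := n) e,
    occursIn_mul_iff (a' := 0) (b' := a) e, and_comm]
  all_goals first
    | intro i; rw [he]; split_ifs <;> omega
    | intro i hi j hj hij
      simp only [Set.mem_ofPred_eq, Fin.lt_def] at hi hj hij ⊢
      rw [he, he]; split_ifs <;> omega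

theorem sum_splitAvoiders_diag_comm (n : ℕ) :
    ∑ t ∈ Finset.range (n + 1), p.splitAvoiders q n t t =
      ∑ t ∈ Finset.range (n + 1), q.splitAvoiders p n t t := by
  refine (Finset.sum_congr rfl fun t ht => ?_).trans (Finset.sum_range_reflect _ (n + 1))
  have := Finset.mem_range.1 ht
  rw [splitAvoiders_comm p q le_rfl (by omega), Nat.add_sub_cancel]

theorem sum_splitAvoiders_succ_comm (n : ℕ) :
    ∑ t ∈ Finset.range n, p.splitAvoiders q n t (t + 1) =
      ∑ t ∈ Finset.range n, q.splitAvoiders p n t (t + 1) := by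
  refine (Finset.sum_congr rfl fun t ht => ?_).trans (Finset.sum_range_reflect _ n)
  have := Finset.mem_range.1 ht
  rw [splitAvoiders_comm p q t.le_succ (by omega)]
  congr 1 <;> omega

noncomputable def disjSumPrefixAvoiders (n t : ℕ) : ℕ :=
  Nat.card {π : Equiv.Perm (Fin n) // ¬ (DisjSum p q).Occurs π ∧ ¬ p.OccursIn π 0 t}

theorem disjSumPrefixAvoiders_zero (hk : 0 < k) (n : ℕ) :
    p.disjSumPrefixAvoiders q n 0 = (DisjSum p q).avoiders n :=
  Nat.card_congr (Equiv.subtypeEquivRight fun _ =>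
    ⟨fun h => h.1, fun h => ⟨h, not_occursIn_of_le hk le_rfl⟩⟩)

theorem disjSumPrefixAvoiders_self (hl : 0 < l) (n : ℕ) :
    p.disjSumPrefixAvoiders q n n = p.splitAvoiders q n n n := by
  refine Nat.card_congr (Equiv.subtypeEquivRight fun π =>
    ⟨fun h => ⟨h.2, not_occursIn_of_le hl le_rfl⟩, fun h => ⟨fun hocc => ?_, h.1⟩⟩)
  obtain ⟨s, hP, -⟩ := (disjSum_occurs_iff p q hl π).1 hocc
  exact h.1 hP.extend_right

theorem disjSumPrefixAvoiders_add_splitAvoiders (hl : 0 < l) (n t : ℕ) :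
    p.disjSumPrefixAvoiders q n t + p.splitAvoiders q n (t + 1) (t + 1) =
      p.disjSumPrefixAvoiders q n (t + 1) + p.splitAvoiders q n t (t + 1) := by
  have hfirst : ∀ π : Equiv.Perm (Fin n), ¬ p.OccursIn π 0 t → p.OccursIn π 0 (t + 1) →
      (¬ (DisjSum p q).Occurs π ↔ ¬ q.OccursIn π (t + 1) n) := by
    intro π hPt hPt1
    rw [disjSum_occurs_iff p q hl, not_iff_not]
    refine ⟨fun ⟨s, hP, hQ⟩ => hQ.mono ?_ le_rfl, fun hQ => ⟨t + 1, hPt1, hQ⟩⟩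
    by_contra! hst
    exact hPt (hP.mono le_rfl (by omega))
  have hD : p.disjSumPrefixAvoiders q n t =
      Nat.card {π : Equiv.Perm (Fin n) //
        (¬ p.OccursIn π 0 t ∧ ¬ q.OccursIn π (t + 1) n) ∧ p.OccursIn π 0 (t + 1)} +
      p.disjSumPrefixAvoiders q n (t + 1) :=
    Nat.card_subtype_eq_add_of_iff (R := fun π => p.OccursIn π 0 (t + 1))
      (fun π => ⟨fun ⟨⟨hav, hPt⟩, hPt1⟩ => ⟨⟨hPt, (hfirst π hPt hPt1).1 hav⟩, hPt1⟩,
        fun ⟨⟨hPt, hQ⟩, hPt1⟩ => ⟨⟨(hfirst π hPt hPt1).2 hQ, hPt⟩, hPt1⟩⟩)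
      (fun π => ⟨fun h => ⟨h.1.1, h.2⟩,
        fun h => ⟨⟨h.1, fun hP => h.2 (hP.mono le_rfl t.le_succ)⟩, h.2⟩⟩)
  have hN : p.splitAvoiders q n t (t + 1) =
      Nat.card {π : Equiv.Perm (Fin n) //
        (¬ p.OccursIn π 0 t ∧ ¬ q.OccursIn π (t + 1) n) ∧ p.OccursIn π 0 (t + 1)} +
      p.splitAvoiders q n (t + 1) (t + 1) :=
    Nat.card_subtype_eq_add_of_iff (R := fun π => p.OccursIn π 0 (t + 1))
      (fun _ => Iff.rfl)
      (fun π => ⟨fun h => ⟨h.2, h.1.2⟩,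
        fun h => ⟨⟨fun hP => h.1 (hP.mono le_rfl t.le_succ), h.2⟩, h.1⟩⟩)
  omega

theorem avoiders_disjSum_add_sum_splitAvoiders (hk : 0 < k) (hl : 0 < l) (n : ℕ) :
    (DisjSum p q).avoiders n + ∑ t ∈ Finset.range (n + 1), p.splitAvoiders q n t t =
      p.splitAvoiders q n 0 0 + p.splitAvoiders q n n n +
        ∑ t ∈ Finset.range n, p.splitAvoiders q n t (t + 1) := by
  have := Finset.add_sum_range_eq_of_add_eq
    (disjSumPrefixAvoiders_add_splitAvoiders p q hl n) n
  rw [disjSumPrefixAvoiders_zero p q hk, disjSumPrefixAvoiders_self p q hl] at this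
  rw [Finset.sum_range_succ']
  omega

end DisjSum

end POP

/-- **Theorem 1.5.** For any two POPs `p` and `q`, `p + q ∼ q + p`. -/
theorem disjSum_comm_wilfEquiv {k l : ℕ} (p : POP k) (q : POP l) :
    WilfEquiv (DisjSum p q) (DisjSum q p) := by
  intro n _
  rcases Nat.eq_zero_or_pos k with rfl | hk
  · exact POP.avoiders_congr _ _ (Nat.add_comm 0 l) (fun a b =>
      (POP.disjSum_lt_iff_of_zero_left p q a b).trans
        (POP.disjSum_lt_iff_of_zero_right q p a b).symm) n
  rcases Nat.eq_zero_or_pos l with rfl | hl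
  · exact POP.avoiders_congr _ _ (Nat.add_comm k 0) (fun a b =>
      (POP.disjSum_lt_iff_of_zero_right p q a b).trans
        (POP.disjSum_lt_iff_of_zero_left q p a b).symm) n
  have hpq := POP.avoiders_disjSum_add_sum_splitAvoiders p q hk hl n
  have hqp := POP.avoiders_disjSum_add_sum_splitAvoiders q p hl hk n
  have hfirst := POP.splitAvoiders_comm p q (n := n) (Nat.zero_le 0) (Nat.zero_le n)
  have hlast := POP.splitAvoiders_comm p q (n := n) le_rfl le_rfl
  rw [POP.sum_splitAvoiders_diag_comm, POP.sum_splitAvoiders_succ_comm] at hpq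
  simp only [Nat.sub_zero, Nat.sub_self] at hfirst hlast
  omega
end

section
/- The POPs (1,2;3,5;4) and (1,2;5,3;4) are Wilf-equivalent. (Explicitly, (1,2;3,5;4) is the POP of size 5 whose only strict relations are 2 below 1 and 5 below 3, with 4 isolated; (1,2;5,3;4) is the POP of size 5 whose only strict relations are 2 below 1 and 3 below 5, with 4 isolated.) -/
/-- The POP `(1,2;3,5;4)`: only relations `2 < 1` and `5 < 3`, label `4` isolated. -/
def pop12c35i4 : POP 5 where
  lt a b := (a = 2 ∧ b = 1) ∨
    (a = 5 ∧ b = 3)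
  supp a b h := by omega
  irrefl a h := by omega
  trans a b c h1 h2 := by omega

/-- The POP `(1,2;5,3;4)`: only relations `2 < 1` and `3 < 5`, label `4` isolated. -/
def pop12c53i4 : POP 5 where
  lt a b := (a = 2 ∧ b = 1) ∨
    (a = 3 ∧ b = 5)
  supp a b h := by omega
  irrefl a h := by omega
  trans a b c h1 h2 := by omega

namespace Finset

variable {α : Type*} [LinearOrder α] (s : Finset α) {x y : α}

noncomputable def reflectPerm : Equiv.Perm α :=
  Equiv.Perm.ofSubtype ((s.orderIsoOfFin rfl).toEquiv.permCongr Fin.revPerm)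

variable {s}

theorem reflectPerm_apply_of_notMem (hx : x ∉ s) : s.reflectPerm x = x :=
  Equiv.Perm.ofSubtype_apply_of_not_mem _ hx

theorem reflectPerm_lt_reflectPerm_iff (hx : x ∈ s) (hy : y ∈ s) :
    s.reflectPerm x < s.reflectPerm y ↔ y < x := by
  simp only [reflectPerm, Equiv.Perm.ofSubtype_apply_of_mem _ hx,
    Equiv.Perm.ofSubtype_apply_of_mem _ hy, Equiv.permCongr_apply, Subtype.coe_lt_coe]
  simp

variable (s)

theorem reflectPerm_mul_self : s.reflectPerm * s.reflectPerm = 1 := by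
  rw [reflectPerm, ← map_mul, ← map_one (Equiv.Perm.ofSubtype (p := (· ∈ s)))]
  congr 1
  ext x
  simp

theorem map_reflectPerm : s.map s.reflectPerm.toEmbedding = s :=
  map_perm fun _ hx => by_contra fun h => hx (reflectPerm_apply_of_notMem h)

end Finset

namespace Equiv.Perm

variable {α : Type*} [LinearOrder α] [Fintype α] {π σ : Perm α} {i j k : α}

def afterFirstInversion (π : Perm α) : Finset α :=
  {j | ∃ i k, i < k ∧ k < j ∧ π k < π i}

theorem mem_afterFirstInversion :
    j ∈ π.afterFirstInversion ↔ ∃ i k, i < k ∧ k < j ∧ π k < π i := by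
  simp [afterFirstInversion]

theorem mem_afterFirstInversion_of_le (hj : j ∈ π.afterFirstInversion) (hjk : j ≤ k) :
    k ∈ π.afterFirstInversion := by
  obtain ⟨i', k', hik', hkj, hinv⟩ := mem_afterFirstInversion.1 hj
  exact mem_afterFirstInversion.2 ⟨i', k', hik', hkj.trans_le hjk, hinv⟩

theorem lt_of_notMem_afterFirstInversion (hj : j ∈ π.afterFirstInversion)
    (hk : k ∉ π.afterFirstInversion) : k < j :=
  lt_of_not_ge fun hjk => hk (mem_afterFirstInversion_of_le hj hjk)

theorem exists_inversion_notMem_afterFirstInversion (h : ∃ i k, i < k ∧ π k < π i) :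
    ∃ i k, i < k ∧ π k < π i ∧ k ∉ π.afterFirstInversion := by
  obtain ⟨k, ⟨i, hik, hinv⟩, hmin⟩ := wellFounded_lt.has_min {k | ∃ i, i < k ∧ π k < π i}
    (let ⟨i, k, hik, hinv⟩ := h; ⟨k, i, hik, hinv⟩)
  refine ⟨i, k, hik, hinv, fun hk => ?_⟩
  obtain ⟨i', k', hik', hk'k, hinv'⟩ := mem_afterFirstInversion.1 hk
  exact hmin k' ⟨i', hik', hinv'⟩ hk'k

theorem afterFirstInversion_eq_of_eqOn (h : ∀ j ∉ π.afterFirstInversion, σ j = π j) :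
    σ.afterFirstInversion = π.afterFirstInversion := by
  ext j
  simp only [mem_afterFirstInversion]
  constructor
  · rintro ⟨i, k, hik, hkj, hinv⟩
    by_cases hk : k ∈ π.afterFirstInversion
    · exact mem_afterFirstInversion.1 (mem_afterFirstInversion_of_le hk hkj.le)
    · have hi : i ∉ π.afterFirstInversion :=
        fun hi => hk (mem_afterFirstInversion_of_le hi hik.le)
      exact ⟨i, k, hik, hkj, by rwa [← h k hk, ← h i hi]⟩
  · intro hj
    obtain ⟨i, k, hik, hinv, hk⟩ := exists_inversion_notMem_afterFirstInversion
      (let ⟨i, k, hik, _, hinv⟩ := hj; ⟨i, k, hik, hinv⟩)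
    have hi : i ∉ π.afterFirstInversion :=
      fun hi => hk (mem_afterFirstInversion_of_le hi hik.le)
    exact ⟨i, k, hik, lt_of_notMem_afterFirstInversion (mem_afterFirstInversion.2 hj) hk,
      by rwa [h k hk, h i hi]⟩

noncomputable def flipAfterFirstInversion (π : Perm α) : Perm α :=
  (π.afterFirstInversion.map π.toEmbedding).reflectPerm * π

theorem flipAfterFirstInversion_apply_of_notMem (hj : j ∉ π.afterFirstInversion) :
    π.flipAfterFirstInversion j = π j :=
  Finset.reflectPerm_apply_of_notMem (by simpa using hj)

theorem flipAfterFirstInversion_lt_iff (hi : i ∈ π.afterFirstInversion)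
    (hj : j ∈ π.afterFirstInversion) :
    π.flipAfterFirstInversion i < π.flipAfterFirstInversion j ↔ π j < π i :=
  Finset.reflectPerm_lt_reflectPerm_iff (by simpa using hi) (by simpa using hj)

theorem afterFirstInversion_flipAfterFirstInversion :
    π.flipAfterFirstInversion.afterFirstInversion = π.afterFirstInversion :=
  afterFirstInversion_eq_of_eqOn fun _ => flipAfterFirstInversion_apply_of_notMem

theorem flipAfterFirstInversion_involutive :
    Function.Involutive (flipAfterFirstInversion (α := α)) := by
  intro π
  set s := π.afterFirstInversion.map π.toEmbedding
  have hs : π.flipAfterFirstInversion.afterFirstInversion.map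
      π.flipAfterFirstInversion.toEmbedding = s := by
    rw [afterFirstInversion_flipAfterFirstInversion, flipAfterFirstInversion, mul_def,
      Equiv.trans_toEmbedding, ← Finset.map_map]
    exact Finset.map_reflectPerm s
  rw [flipAfterFirstInversion, hs, flipAfterFirstInversion, ← mul_assoc,
    Finset.reflectPerm_mul_self, one_mul]

end Equiv.Perm

namespace POP

variable {k m : ℕ}

theorem ext {p q : POP k} (h : ∀ a b, p.lt a b ↔ q.lt a b) : p = q := by
  obtain ⟨lt, _⟩ := p
  obtain ⟨lt', _⟩ := q
  obtain rfl : lt = lt' := funext₂ fun a b => propext (h a b)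
  rfl

/-- The complement `c(p)`: `π` contains `p` iff its complement contains `p.dual`. -/
def dual (p : POP k) : POP k where
  lt a b := p.lt b a
  supp a b h := by have := p.supp b a h; omega
  irrefl a := p.irrefl a
  trans a b c hab hbc := p.trans c b a hbc hab

theorem dual_dual (p : POP k) : p.dual.dual = p := rfl

/-- The POP `(1,2)`, whose occurrences are the inversions. -/
def pattern21 : POP 2 where
  lt a b := a = 2 ∧ b = 1
  supp a b h := by omega
  irrefl a h := by omega
  trans a b c h1 h2 := by omega

open Equiv.Perm in
theorem Occurs.flipAfterFirstInversion {n : ℕ} {q : POP m} {π : Equiv.Perm (Fin n)}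
    (h : (DisjSum pattern21 q).Occurs π) :
    (DisjSum pattern21 q.dual).Occurs π.flipAfterFirstInversion := by
  obtain ⟨f, hf, hrel⟩ := h
  have hf01 : f ⟨0, by omega⟩ < f ⟨1, by omega⟩ := hf (Fin.mk_lt_mk.2 zero_lt_one)
  have hinv : π (f ⟨1, by omega⟩) < π (f ⟨0, by omega⟩) :=
    hrel _ _ (Or.inl ⟨le_rfl, by simp, rfl, rfl⟩)
  have hafter (a : Fin (2 + m)) (ha : 2 ≤ (a : ℕ)) : f a ∈ π.afterFirstInversion :=
    mem_afterFirstInversion.2 ⟨_, _, hf01, hf (Fin.mk_lt_mk.2 (by omega)), hinv⟩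
  obtain ⟨i, k, hik, hki, hk⟩ := exists_inversion_notMem_afterFirstInversion ⟨_, _, hf01, hinv⟩
  have hi : i ∉ π.afterFirstInversion := fun hi => hk (mem_afterFirstInversion_of_le hi hik.le)
  have hkf (a : Fin (2 + m)) (ha : 2 ≤ (a : ℕ)) : k < f a :=
    lt_of_notMem_afterFirstInversion (hafter a ha) hk
  refine ⟨fun a => if (a : ℕ) = 0 then i else if (a : ℕ) = 1 then k else f a, ?_, ?_⟩
  · intro a b hab
    have hab' : (a : ℕ) < b := hab
    dsimp only
    split_ifs <;> first
      | omega
      | exact hik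
      | exact hik.trans (hkf b (by omega))
      | exact hkf b (by omega)
      | exact hf hab
  · rintro a b (⟨-, -, ha, hb⟩ | ⟨ha, hb, hq⟩)
    · simp only [show (a : ℕ) = 1 by omega, show (b : ℕ) = 0 by omega, one_ne_zero, ↓reduceIte,
        flipAfterFirstInversion_apply_of_notMem hk, flipAfterFirstInversion_apply_of_notMem hi,
        hki]
    · simp only [show (a : ℕ) ≠ 0 by omega, show (a : ℕ) ≠ 1 by omega,
        show (b : ℕ) ≠ 0 by omega, show (b : ℕ) ≠ 1 by omega, ↓reduceIte]
      rw [flipAfterFirstInversion_lt_iff (hafter a (by omega)) (hafter b (by omega))]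
      exact hrel b a (Or.inr ⟨hb, ha, hq⟩)

theorem wilfEquiv_disjSum_pattern21_dual (q : POP m) :
    WilfEquiv (DisjSum pattern21 q) (DisjSum pattern21 q.dual) := fun _ _ =>
  Nat.card_congr <| Equiv.subtypeEquiv
    Equiv.Perm.flipAfterFirstInversion_involutive.toPerm fun π => not_congr
      ⟨Occurs.flipAfterFirstInversion, fun h => by
        simpa only [Function.Involutive.coe_toPerm,
          Equiv.Perm.flipAfterFirstInversion_involutive π, dual_dual] using
          Occurs.flipAfterFirstInversion (q := q.dual) h⟩

end POP

def pop13i2 : POP 3 where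
  lt a b := a = 3 ∧ b = 1
  supp a b h := by omega
  irrefl a h := by omega
  trans a b c h1 h2 := by omega

/-- The POPs `(1,2;3,5;4)` and `(1,2;5,3;4)` are Wilf-equivalent. -/
theorem stmt17 : WilfEquiv pop12c35i4 pop12c53i4 := by
  have h₁ : pop12c35i4 = DisjSum POP.pattern21 pop13i2 := POP.ext fun a b => by
    simp only [pop12c35i4, DisjSum, POP.pattern21, pop13i2]
    omega
  have h₂ : pop12c53i4 = DisjSum POP.pattern21 pop13i2.dual := POP.ext fun a b => by
    simp only [pop12c53i4, DisjSum, POP.pattern21, pop13i2, POP.dual]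
    omega
  rw [h₁, h₂]
  exact POP.wilfEquiv_disjSum_pattern21_dual pop13i2
end
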